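/- arXiv:2504.03885 — 4 statements merged into one kernel-verified Lean document; each statement's English description precedes it below -/
import Mathlib

section
/- The Minkowski sum of two constrained zonotopes Z₁ = ⟨G₁, c₁, A₁, b₁⟩ and Z₂ = ⟨G₂, c₂, A₂, b₂⟩ equals the constrained zonotope ⟨[G₁ G₂], c₁ + c₂, blkdiag(A₁, A₂), (b₁; b₂)⟩. -/
/-! Splitting the parameter `ξ : g₁ ⊕ g₂ → ℝ` of the stacked zonotope as `Sum.elim ξ₁ ξ₂`
decouples the block-diagonal constraints and the box, and turns `[G₁ G₂] ξ` into
`G₁ ξ₁ + G₂ ξ₂`; so its points are exactly the sums of a point of each zonotope. -/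

open Matrix Pointwise

def conZono {n g m : Type*} [Fintype g] [Fintype m]
    (G : Matrix n g ℝ) (c : n → ℝ) (A : Matrix m g ℝ) (b : m → ℝ) : Set (n → ℝ) :=
  {x | ∃ ξ : g → ℝ, A.mulVec ξ = b ∧ (∀ i, |ξ i| ≤ 1) ∧ x = G.mulVec ξ + c}

theorem fromBlocks_zero_zero_mulVec_sumElim {l m n o α : Type*} [Fintype l] [Fintype m]
    [NonUnitalNonAssocSemiring α] (A : Matrix n l α) (D : Matrix o m α) (x : l → α)
    (y : m → α) :
    fromBlocks A 0 0 D *ᵥ Sum.elim x y = Sum.elim (A *ᵥ x) (D *ᵥ y) := by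
  simp [fromBlocks_mulVec]

theorem mem_conZono_fromCols_fromBlocks {n g₁ g₂ m₁ m₂ : Type*}
    [Fintype g₁] [Fintype g₂] [Fintype m₁] [Fintype m₂]
    (G₁ : Matrix n g₁ ℝ) (A₁ : Matrix m₁ g₁ ℝ) (b₁ : m₁ → ℝ)
    (G₂ : Matrix n g₂ ℝ) (A₂ : Matrix m₂ g₂ ℝ) (b₂ : m₂ → ℝ) (c x : n → ℝ) :
    x ∈ conZono (fromCols G₁ G₂) c (fromBlocks A₁ 0 0 A₂) (Sum.elim b₁ b₂) ↔
      ∃ ξ₁ ξ₂, (A₁ *ᵥ ξ₁ = b₁ ∧ ∀ i, |ξ₁ i| ≤ 1) ∧ (A₂ *ᵥ ξ₂ = b₂ ∧ ∀ i, |ξ₂ i| ≤ 1) ∧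
        x = G₁ *ᵥ ξ₁ + G₂ *ᵥ ξ₂ + c := by
  constructor
  · rintro ⟨ξ, hA, hbox, rfl⟩
    rw [← Sum.elim_comp_inl_inr ξ] at hA hbox ⊢
    rw [fromBlocks_zero_zero_mulVec_sumElim, Sum.elim_eq_iff] at hA
    rw [Sum.forall] at hbox
    exact ⟨_, _, ⟨hA.1, hbox.1⟩, ⟨hA.2, hbox.2⟩, by rw [fromCols_mulVec_sumElim]⟩
  · rintro ⟨ξ₁, ξ₂, ⟨hA₁, hbox₁⟩, ⟨hA₂, hbox₂⟩, rfl⟩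
    refine ⟨Sum.elim ξ₁ ξ₂, ?_, Sum.forall.2 ⟨hbox₁, hbox₂⟩, by rw [fromCols_mulVec_sumElim]⟩
    rw [fromBlocks_zero_zero_mulVec_sumElim, hA₁, hA₂]

/-- the Minkowski sum of two constrained zonotopes is the constrained
zonotope `⟨[G₁ G₂], c₁ + c₂, blkdiag(A₁, A₂), (b₁; b₂)⟩`. -/
theorem minkSum_conZono {n g₁ g₂ m₁ m₂ : Type*}
    [Fintype g₁] [Fintype g₂] [Fintype m₁] [Fintype m₂]
    (G₁ : Matrix n g₁ ℝ) (c₁ : n → ℝ) (A₁ : Matrix m₁ g₁ ℝ) (b₁ : m₁ → ℝ)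
    (G₂ : Matrix n g₂ ℝ) (c₂ : n → ℝ) (A₂ : Matrix m₂ g₂ ℝ) (b₂ : m₂ → ℝ) :
    conZono G₁ c₁ A₁ b₁ + conZono G₂ c₂ A₂ b₂
      = conZono (Matrix.fromCols G₁ G₂) (c₁ + c₂)
          (Matrix.fromBlocks A₁ 0 0 A₂) (Sum.elim b₁ b₂) := by
  ext x
  rw [Set.mem_add, mem_conZono_fromCols_fromBlocks]
  constructor
  · rintro ⟨_, ⟨ξ₁, hA₁, hbox₁, rfl⟩, _, ⟨ξ₂, hA₂, hbox₂, rfl⟩, rfl⟩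
    exact ⟨ξ₁, ξ₂, ⟨hA₁, hbox₁⟩, ⟨hA₂, hbox₂⟩, by abel⟩
  · rintro ⟨ξ₁, ξ₂, ⟨hA₁, hbox₁⟩, ⟨hA₂, hbox₂⟩, rfl⟩
    exact ⟨_, ⟨ξ₁, hA₁, hbox₁, rfl⟩, _, ⟨ξ₂, hA₂, hbox₂, rfl⟩, by abel⟩
end

section
/- The generalized intersection Z₁ ∩_R Z₂ = {z ∈ Z₁ | Rz ∈ Z₂} of constrained zonotopes Z₁ = ⟨G₁, c₁, A₁, b₁⟩ and Z₂ = ⟨G₂, c₂, A₂, b₂⟩ equals the constrained zonotope ⟨[G₁ 0], c₁, [[A₁, 0],[0, A₂],[RG₁, −G₂]], (b₁; b₂; c₂ − Rc₁)⟩. -/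
open Matrix

/-! A point of the generalized intersection is `G₁ ξ₁ + c₁` with `ξ₁` admissible for `Z₁`,
whose image under `R` is `G₂ ξ₂ + c₂` with `ξ₂` admissible for `Z₂`. Stacking `(ξ₁, ξ₂)` into one
factor vector, the three conditions become the three block rows of the lifted constraint,
the last one being `R G₁ ξ₁ - G₂ ξ₂ = c₂ - R c₁`. -/

theorem mem_conZono_sum_iff {n g₁ g₂ m : Type*} [Fintype g₁] [Fintype g₂] [Fintype m]
    (G : Matrix n (g₁ ⊕ g₂) ℝ) (c : n → ℝ) (A : Matrix m (g₁ ⊕ g₂) ℝ) (b : m → ℝ)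
    (x : n → ℝ) :
    x ∈ conZono G c A b ↔ ∃ ξ₁ ξ₂, A *ᵥ Sum.elim ξ₁ ξ₂ = b ∧ (∀ i, |ξ₁ i| ≤ 1) ∧
      (∀ j, |ξ₂ j| ≤ 1) ∧ x = G *ᵥ Sum.elim ξ₁ ξ₂ + c := by
  simp only [conZono, Set.mem_ofPred_eq, Sum.exists_sum, Sum.forall, and_assoc]
  rfl

theorem fromBlocks_diag_mulVec_sumElim {α l m n o : Type*} [Fintype l] [Fintype m]
    [NonUnitalNonAssocSemiring α] (A : Matrix n l α) (D : Matrix o m α)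
    (v : l → α) (w : m → α) :
    fromBlocks A 0 0 D *ᵥ Sum.elim v w = Sum.elim (A *ᵥ v) (D *ᵥ w) := by
  simp [fromBlocks_mulVec]

theorem fromCols_mul_neg_mulVec_sumElim_eq_iff {α n₁ n₂ g₁ g₂ : Type*}
    [Fintype n₁] [Fintype n₂] [Fintype g₁] [Fintype g₂] [CommRing α]
    (R : Matrix n₂ n₁ α) (G₁ : Matrix n₁ g₁ α) (G₂ : Matrix n₂ g₂ α) (c₁ : n₁ → α)
    (c₂ : n₂ → α) (ξ₁ : g₁ → α) (ξ₂ : g₂ → α) :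
    fromCols (R * G₁) (-G₂) *ᵥ Sum.elim ξ₁ ξ₂ = c₂ - R *ᵥ c₁ ↔
      R *ᵥ (G₁ *ᵥ ξ₁ + c₁) = G₂ *ᵥ ξ₂ + c₂ := by
  rw [fromCols_mulVec_sumElim, neg_mulVec, ← mulVec_mulVec, mulVec_add, eq_sub_iff_add_eq,
    ← sub_eq_add_neg, sub_add_eq_add_sub, sub_eq_iff_eq_add, add_comm c₂]

/-- the generalized intersection `Z₁ ∩_R Z₂ = {z ∈ Z₁ | Rz ∈ Z₂}` equals the
constrained zonotope `⟨[G₁ 0], c₁, [[A₁,0],[0,A₂],[RG₁,−G₂]], (b₁; b₂; c₂ − Rc₁)⟩`. -/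
theorem genIntersection_conZono {n₁ n₂ g₁ g₂ m₁ m₂ : Type*}
    [Fintype n₁] [Fintype n₂] [Fintype g₁] [Fintype g₂] [Fintype m₁] [Fintype m₂]
    (G₁ : Matrix n₁ g₁ ℝ) (c₁ : n₁ → ℝ) (A₁ : Matrix m₁ g₁ ℝ) (b₁ : m₁ → ℝ)
    (G₂ : Matrix n₂ g₂ ℝ) (c₂ : n₂ → ℝ) (A₂ : Matrix m₂ g₂ ℝ) (b₂ : m₂ → ℝ)
    (R : Matrix n₂ n₁ ℝ) :
    {z ∈ conZono G₁ c₁ A₁ b₁ | R.mulVec z ∈ conZono G₂ c₂ A₂ b₂}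
      = conZono (Matrix.fromCols G₁ 0) c₁
          (Matrix.fromRows (Matrix.fromBlocks A₁ 0 0 A₂)
            (Matrix.fromCols (R * G₁) (-G₂)))
          (Sum.elim (Sum.elim b₁ b₂) (c₂ - R.mulVec c₁)) := by
  ext z
  simp only [Set.mem_sep_iff, mem_conZono_sum_iff, fromRows_mulVec,
    fromBlocks_diag_mulVec_sumElim, Sum.elim_eq_iff, fromCols_mul_neg_mulVec_sumElim_eq_iff]
  simp only [fromCols_mulVec_sumElim, zero_mulVec, add_zero]
  constructor
  · rintro ⟨⟨ξ₁, hA₁, hξ₁, rfl⟩, ξ₂, hA₂, hξ₂, hR⟩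
    exact ⟨ξ₁, ξ₂, ⟨⟨hA₁, hA₂⟩, hR⟩, hξ₁, hξ₂, rfl⟩
  · rintro ⟨ξ₁, ξ₂, ⟨⟨hA₁, hA₂⟩, hR⟩, hξ₁, hξ₂, rfl⟩
    exact ⟨⟨ξ₁, hA₁, hξ₁, rfl⟩, ξ₂, hA₂, hξ₂, hR⟩
end

section
/- If P̃ is symmetric positive semi-definite, ρ > 0, and A has full row rank, then the KKT matrix M = [[P̃ + ρI, Aᵀ],[A, 0]] is nonsingular. -/
/-! If `M (x, y) = 0` then `(P̃ + ρI) x + Aᵀ y = 0` and `A x = 0`, so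
`xᵀ (P̃ + ρI) x = -(A x)ᵀ y = 0`; since `xᵀ P̃ x ≥ 0` and `ρ > 0` this forces `x = 0`. Then
`Aᵀ y = 0`, and `Aᵀ` is injective because `A` has full row rank, so `y = 0`. -/

open Matrix

namespace Matrix

variable {m n K : Type*} [Fintype n]

theorem mulVec_injective_of_rank_eq_card_width [Field K] (B : Matrix m n K)
    (hB : B.rank = Fintype.card n) : Function.Injective B.mulVec := by
  have hker : Module.finrank K (LinearMap.ker B.mulVecLin) = 0 := by
    have := B.mulVecLin.finrank_range_add_finrank_ker
    rw [Module.finrank_fintype_fun_eq_card, ← rank, hB] at this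
    omega
  rw [← coe_mulVecLin, ← LinearMap.ker_eq_bot]
  exact Submodule.finrank_eq_zero.mp hker

theorem eq_zero_of_dotProduct_add_smul_one_mulVec_eq_zero [DecidableEq n] {R : Type*}
    [CommRing R] [LinearOrder R] [IsStrictOrderedRing R] (P : Matrix n n R)
    (hP : ∀ x, 0 ≤ x ⬝ᵥ P *ᵥ x) {ρ : R} (hρ : 0 < ρ) (x : n → R)
    (hx : x ⬝ᵥ (P + ρ • 1) *ᵥ x = 0) : x = 0 := by
  rw [add_mulVec, smul_mulVec, one_mulVec, dotProduct_add, dotProduct_smul, smul_eq_mul] at hx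
  have hxx : 0 ≤ x ⬝ᵥ x := Finset.sum_nonneg fun i _ => mul_self_nonneg (x i)
  have hρx : ρ * (x ⬝ᵥ x) = 0 := ((add_eq_zero_iff_of_nonneg (hP x) (by positivity)).mp hx).2
  exact dotProduct_self_eq_zero.mp ((mul_eq_zero.mp hρx).resolve_left hρ.ne')

theorem isUnit_fromBlocks_transpose_zero [Fintype m] [DecidableEq m] [DecidableEq n] [Field K]
    (B : Matrix n n K) (hB : ∀ x, x ⬝ᵥ B *ᵥ x = 0 → x = 0)
    (A : Matrix m n K) (hA : Function.Injective Aᵀ.mulVec) :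
    IsUnit (fromBlocks B Aᵀ A 0) := by
  refine mulVec_injective_iff_isUnit.mp ((injective_iff_map_eq_zero (mulVecLin _)).mpr ?_)
  intro v hv
  rw [← Sum.elim_comp_inl_inr v] at hv ⊢
  generalize v ∘ Sum.inl = x, v ∘ Sum.inr = y at hv ⊢
  rw [coe_mulVecLin, fromBlocks_mulVec] at hv
  simp only [Sum.elim_comp_inl, Sum.elim_comp_inr, zero_mulVec, add_zero] at hv
  obtain ⟨hBA, hAx⟩ := Sum.elim_eq_iff.mp (hv.trans Sum.elim_zero_zero.symm)
  have hx : x = 0 := hB x <| calc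
    x ⬝ᵥ B *ᵥ x = x ⬝ᵥ (B *ᵥ x + Aᵀ *ᵥ y) - (A *ᵥ x) ⬝ᵥ y := by
      rw [dotProduct_add, dotProduct_mulVec x Aᵀ, vecMul_transpose, add_sub_cancel_right]
    _ = 0 := by rw [hBA, hAx, dotProduct_zero, zero_dotProduct, sub_zero]
  subst hx
  have hy : y = 0 := hA (by simpa using hBA)
  rw [hy, Sum.elim_zero_zero]

end Matrix

theorem kkt_matrix_nonsingular_general {n m : ℕ}
    (Pt : Matrix (Fin n) (Fin n) ℝ)
    (hpsd : ∀ ξ : Fin n → ℝ, 0 ≤ ξ ⬝ᵥ Pt.mulVec ξ)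
    (ρ : ℝ) (hρ : 0 < ρ)
    (A : Matrix (Fin m) (Fin n) ℝ) (hrank : A.rank = m) :
    IsUnit (Matrix.fromBlocks (Pt + ρ • (1 : Matrix (Fin n) (Fin n) ℝ)) Aᵀ A
      (0 : Matrix (Fin m) (Fin m) ℝ)) :=
  isUnit_fromBlocks_transpose_zero _
    (eq_zero_of_dotProduct_add_smul_one_mulVec_eq_zero Pt hpsd hρ) A
    (Aᵀ.mulVec_injective_of_rank_eq_card_width (by rw [rank_transpose, hrank, Fintype.card_fin]))

/-- if `P̃` is symmetric positive semi-definite, `ρ > 0`, and `A` has full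
row rank, then the KKT matrix `M = [[P̃ + ρI, Aᵀ],[A, 0]]` is nonsingular. -/
theorem kkt_matrix_nonsingular {n m : ℕ}
    (Pt : Matrix (Fin n) (Fin n) ℝ) (hsymm : Pt.IsSymm)
    (hpsd : ∀ ξ : Fin n → ℝ, 0 ≤ ξ ⬝ᵥ Pt.mulVec ξ)
    (ρ : ℝ) (hρ : 0 < ρ)
    (A : Matrix (Fin m) (Fin n) ℝ) (hrank : A.rank = m) :
    IsUnit (Matrix.fromBlocks (Pt + ρ • (1 : Matrix (Fin n) (Fin n) ℝ)) Aᵀ A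
      (0 : Matrix (Fin m) (Fin m) ℝ)) :=
  kkt_matrix_nonsingular_general Pt hpsd ρ hρ A hrank
end

section
/- SVSE sparse form equivalence: for the system x_{k+1} = Ax_k + Bu_k + w_k with measurement y = Cx + v, the set [0 0 I]((X_k × W × (S ∩_C (y_{k+1} ⊕ (−V)))) ∩_{[A I −I]} {−Bu_k}) equals ((A X_k ⊕ Bu_k ⊕ W) ∩_C (y_{k+1} ⊕ (−V))) ∩ S, where ⊕ with a vector denotes translation. -/
open Matrix

theorem add_sub_eq_neg_iff_eq_add_add {G : Type*} [AddCommGroup G] (a b c s : G) :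
    a + c - s = -b ↔ s = a + b + c := by
  rw [sub_eq_iff_eq_add, eq_comm, neg_add_eq_sub, sub_eq_iff_eq_add, add_right_comm]

/-- SVSE sparse form equivalence. For `x_{k+1} = Ax_k + Bu_k + w_k`,
`y = Cx + v`, the set
`[0 0 I]((X_k × W × (S ∩_C (y_{k+1} ⊕ (−V)))) ∩_{[A I −I]} {−Bu_k})` equals
`((A X_k ⊕ Bu_k ⊕ W) ∩_C (y_{k+1} ⊕ (−V))) ∩ S`. -/
theorem svse_sparse_form_equiv {nx nu ny : ℕ}
    (A : Matrix (Fin nx) (Fin nx) ℝ) (B : Matrix (Fin nx) (Fin nu) ℝ)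
    (C : Matrix (Fin ny) (Fin nx) ℝ)
    (Xk W : Set (Fin nx → ℝ)) (V : Set (Fin ny → ℝ)) (S : Set (Fin nx → ℝ))
    (uk : Fin nu → ℝ) (yk1 : Fin ny → ℝ) :
    {s | ∃ x ∈ Xk, ∃ w ∈ W,
        (s ∈ S ∧ C.mulVec s ∈ {p | ∃ v ∈ V, p = yk1 - v}) ∧
        A.mulVec x + w - s = -B.mulVec uk}
      = {z | (∃ x ∈ Xk, ∃ w ∈ W, z = A.mulVec x + B.mulVec uk + w) ∧
          C.mulVec z ∈ {p | ∃ v ∈ V, p = yk1 - v}} ∩ S := by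
  ext s
  simp only [Set.mem_ofPred_eq, Set.mem_inter_iff, add_sub_eq_neg_iff_eq_add_add]
  constructor
  · rintro ⟨x, hx, w, hw, ⟨hS, hC⟩, rfl⟩
    exact ⟨⟨⟨x, hx, w, hw, rfl⟩, hC⟩, hS⟩
  · rintro ⟨⟨⟨x, hx, w, hw, rfl⟩, hC⟩, hS⟩
    exact ⟨x, hx, w, hw, ⟨hS, hC⟩, rfl⟩
end
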